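/- arXiv:1901.10409 — 2 statements merged into one kernel-verified Lean document; each statement's English description precedes it below -/
import Mathlib

section
/- For every x ∈ ℝ one has F(x)² + G(x)² > 0, and consequently the Gardner breather profile B is infinitely differentiable (C^∞) on ℝ. -/
open Real

noncomputable def gardnerG (α β μ c₁ c₂ : ℝ) (x : ℝ) : ℝ :=
  (β * Real.sqrt (α ^ 2 + β ^ 2) / (α * Real.sqrt (α ^ 2 + β ^ 2 - 4 * μ ^ 2)))
      * Real.sin (α * (x + c₁))
    - (2 * β * μ / (α ^ 2 + β ^ 2 - 4 * μ ^ 2)) * Real.exp (β * (x + c₂))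

noncomputable def gardnerF (α β μ c₁ c₂ : ℝ) (x : ℝ) : ℝ :=
  Real.cosh (β * (x + c₂))
    - (2 * β * μ / (α * Real.sqrt (α ^ 2 + β ^ 2 - 4 * μ ^ 2) * Real.sqrt (α ^ 2 + β ^ 2)))
      * (α * Real.cos (α * (x + c₁)) - β * Real.sin (α * (x + c₁)))

/-- The Gardner breather profile `B = 2 (G'F - G F')/(F² + G²)`. -/
noncomputable def gardnerB (α β μ c₁ c₂ : ℝ) (x : ℝ) : ℝ :=
  2 * (deriv (gardnerG α β μ c₁ c₂) x * gardnerF α β μ c₁ c₂ x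
      - gardnerG α β μ c₁ c₂ x * deriv (gardnerF α β μ c₁ c₂) x)
    / ((gardnerF α β μ c₁ c₂ x) ^ 2 + (gardnerG α β μ c₁ c₂ x) ^ 2)

/-- Auxiliary algebraic lemma: the two profile equations cannot vanish simultaneously. -/
lemma gardner_aux (α β μ : ℝ) (hα : α ≠ 0) (hβ : β ≠ 0) (hμ : 0 < μ)
    (S δ si co E : ℝ) (hS : 0 < S) (hδ : 0 < δ) (hEpos : 0 < E)
    (hS2 : S ^ 2 = α ^ 2 + β ^ 2) (hδ2 : δ ^ 2 = α ^ 2 + β ^ 2 - 4 * μ ^ 2)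
    (hpy : si ^ 2 + co ^ 2 = 1)
    (hGeq : β * S / (α * δ) * si - 2 * β * μ / (α ^ 2 + β ^ 2 - 4 * μ ^ 2) * E = 0)
    (hFeq : (E + E⁻¹) / 2 - 2 * β * μ / (α * δ * S) * (α * co - β * si) = 0) : False := by
  have hab : (0:ℝ) < α ^ 2 + β ^ 2 := by positivity
  have hE1 : S * δ * si = 2 * α * μ * E := by
    rw [← hδ2] at hGeq
    field_simp at hGeq
    apply mul_left_cancel₀ (show β * δ ≠ 0 by positivity)
    linear_combination δ * hGeq
  have hE2 : α * δ * S * (E ^ 2 + 1) = 4 * β * μ * E * (α * co - β * si) := by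
    field_simp at hFeq
    linear_combination hFeq
  have h5 : S ^ 2 * δ ^ 2 * si ^ 2 + 4 * α ^ 2 * μ ^ 2
      = 8 * β * μ ^ 2 * si * (α * co - β * si) := by
    apply mul_left_cancel₀ (show α * δ * S ≠ 0 from
      mul_ne_zero (mul_ne_zero hα (ne_of_gt hδ)) (ne_of_gt hS))
    linear_combination (4 * α ^ 2 * μ ^ 2) * hE2
      + (α * δ * S * (S * δ * si + 2 * α * μ * E) - 8 * α * β * μ ^ 2 * (α * co - β * si)) * hE1
  rw [hS2, hδ2] at h5
  have e1 : ((α ^ 2 + β ^ 2) * si) ^ 2 + (2 * α * μ * co - 2 * β * μ * si) ^ 2 = 0 := by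
    linear_combination h5 + (4 * α ^ 2 * μ ^ 2) * hpy
  have h6 : (α ^ 2 + β ^ 2) * si = 0 := by
    nlinarith [sq_nonneg ((α ^ 2 + β ^ 2) * si), sq_nonneg (2 * α * μ * co - 2 * β * μ * si)]
  have hsi0 : si = 0 := by
    rcases mul_eq_zero.mp h6 with h | h
    · exact absurd h (ne_of_gt hab)
    · exact h
  have hco0 : co = 0 := by
    have h8 : (2 * α * μ * co - 2 * β * μ * si) ^ 2 = 0 := by
      nlinarith [sq_nonneg ((α ^ 2 + β ^ 2) * si)]
    have h7 : 2 * α * μ * co - 2 * β * μ * si = 0 := pow_eq_zero_iff (by norm_num) |>.mp h8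
    rw [hsi0] at h7
    have h9 : α * μ * co = 0 := by linarith
    rcases mul_eq_zero.mp h9 with h | h
    · rcases mul_eq_zero.mp h with h | h
      · exact absurd h hα
      · exact absurd h (ne_of_gt hμ)
    · exact h
  rw [hsi0, hco0] at hpy
  norm_num at hpy

theorem gardner_breather_denominator_pos_and_smooth
    (α β μ c₁ c₂ : ℝ) (hα : α ≠ 0) (hβ : β ≠ 0) (hμ : 0 < μ)
    (hΔ : 0 < α ^ 2 + β ^ 2 - 4 * μ ^ 2) :
    (∀ x : ℝ, 0 < (gardnerF α β μ c₁ c₂ x) ^ 2 + (gardnerG α β μ c₁ c₂ x) ^ 2) ∧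
      ContDiff ℝ (⊤ : ℕ∞) (gardnerB α β μ c₁ c₂) := by
  have hab : (0:ℝ) < α ^ 2 + β ^ 2 := by positivity
  have hS : 0 < Real.sqrt (α ^ 2 + β ^ 2) := Real.sqrt_pos.mpr hab
  have hδ : 0 < Real.sqrt (α ^ 2 + β ^ 2 - 4 * μ ^ 2) := Real.sqrt_pos.mpr hΔ
  have hS2 : Real.sqrt (α ^ 2 + β ^ 2) ^ 2 = α ^ 2 + β ^ 2 := Real.sq_sqrt hab.le
  have hδ2 : Real.sqrt (α ^ 2 + β ^ 2 - 4 * μ ^ 2) ^ 2 = α ^ 2 + β ^ 2 - 4 * μ ^ 2 :=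
    Real.sq_sqrt hΔ.le
  have hpos : ∀ x : ℝ, 0 < (gardnerF α β μ c₁ c₂ x) ^ 2 + (gardnerG α β μ c₁ c₂ x) ^ 2 := by
    intro x
    rcases lt_or_eq_of_le (by positivity :
        (0:ℝ) ≤ (gardnerF α β μ c₁ c₂ x) ^ 2 + (gardnerG α β μ c₁ c₂ x) ^ 2) with h | h
    · exact h
    exfalso
    have hF : gardnerF α β μ c₁ c₂ x = 0 := by
      nlinarith [sq_nonneg (gardnerF α β μ c₁ c₂ x), sq_nonneg (gardnerG α β μ c₁ c₂ x)]
    have hG : gardnerG α β μ c₁ c₂ x = 0 := by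
      nlinarith [sq_nonneg (gardnerF α β μ c₁ c₂ x), sq_nonneg (gardnerG α β μ c₁ c₂ x)]
    rw [gardnerG] at hG
    rw [gardnerF, Real.cosh_eq, Real.exp_neg] at hF
    exact gardner_aux α β μ hα hβ hμ _ _ (Real.sin (α * (x + c₁))) (Real.cos (α * (x + c₁)))
      (Real.exp (β * (x + c₂))) hS hδ (Real.exp_pos _) hS2 hδ2 (Real.sin_sq_add_cos_sq _) hG hF
  refine ⟨hpos, ?_⟩
  have hGc : ContDiff ℝ (⊤ : ℕ∞) (gardnerG α β μ c₁ c₂) := by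
    unfold gardnerG
    exact ((contDiff_const.mul (Real.contDiff_sin.comp (by fun_prop))).sub
      (contDiff_const.mul (Real.contDiff_exp.comp (by fun_prop))))
  have hFc : ContDiff ℝ (⊤ : ℕ∞) (gardnerF α β μ c₁ c₂) := by
    unfold gardnerF
    exact ((Real.contDiff_cosh.comp (by fun_prop)).sub
      (contDiff_const.mul ((contDiff_const.mul (Real.contDiff_cos.comp (by fun_prop))).sub
        (contDiff_const.mul (Real.contDiff_sin.comp (by fun_prop))))))
  have hsucc : ∀ f : ℝ → ℝ, ContDiff ℝ (⊤ : ℕ∞) f → ContDiff ℝ (⊤ : ℕ∞) (deriv f) := by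
    intro f hf
    have h1 : ContDiff ℝ (((⊤ : ℕ∞) : WithTop ℕ∞) + 1) f := by
      simpa using hf
    exact (contDiff_succ_iff_deriv.mp h1).2.2
  have hG' := hsucc _ hGc
  have hF' := hsucc _ hFc
  have hB : ContDiff ℝ (⊤ : ℕ∞) (fun x => 2 * (deriv (gardnerG α β μ c₁ c₂) x * gardnerF α β μ c₁ c₂ x
      - gardnerG α β μ c₁ c₂ x * deriv (gardnerF α β μ c₁ c₂) x)
    / ((gardnerF α β μ c₁ c₂ x) ^ 2 + (gardnerG α β μ c₁ c₂ x) ^ 2)) := by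
    apply ContDiff.div
    · exact contDiff_const.mul ((hG'.mul hFc).sub (hGc.mul hF'))
    · exact (hFc.pow 2).add (hGc.pow 2)
    · exact fun x => ne_of_gt (hpos x)
  exact hB
end

section
/- The Gardner breather profile B belongs to the Schwartz class: there is a Schwartz function (ℝ → ℝ) that agrees with B at every x ∈ ℝ; equivalently, B is C^∞ and for all k, n ∈ ℕ the quantity sup_{x∈ℝ} |x|^k·|B^{(n)}(x)| is finite. -/
open Real

open Real Complex

noncomputable section

/-- complex sum of exponential terms -/
def sumC (L : List (ℂ × ℂ)) (x : ℝ) : ℂ :=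
  (L.map (fun p => p.1 * Complex.exp (p.2 * x))).sum

/-- real exponential polynomial evaluation -/
def evalEP (L : List (ℂ × ℂ)) (x : ℝ) : ℝ := (sumC L x).re

def derivL (L : List (ℂ × ℂ)) : List (ℂ × ℂ) := L.map (fun p => (p.1 * p.2, p.2))

def mulL (L M : List (ℂ × ℂ)) : List (ℂ × ℂ) :=
  L.flatMap (fun p => M.flatMap (fun q =>
    [(p.1 * q.1 / 2, p.2 + q.2), (p.1 * (starRingEnd ℂ) q.1 / 2, p.2 + (starRingEnd ℂ) q.2)]))

def smulL (a : ℂ) (L : List (ℂ × ℂ)) : List (ℂ × ℂ) := L.map (fun p => (a * p.1, p.2))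

lemma sumC_nil (x : ℝ) : sumC [] x = 0 := rfl
lemma sumC_cons (p : ℂ × ℂ) (L : List (ℂ × ℂ)) (x : ℝ) :
    sumC (p :: L) x = p.1 * Complex.exp (p.2 * x) + sumC L x := by
  simp [sumC]
lemma sumC_append (L M : List (ℂ × ℂ)) (x : ℝ) :
    sumC (L ++ M) x = sumC L x + sumC M x := by
  simp [sumC]

lemma evalEP_cons (p : ℂ × ℂ) (L : List (ℂ × ℂ)) (x : ℝ) :
    evalEP (p :: L) x = (p.1 * Complex.exp (p.2 * x)).re + evalEP L x := by
  simp [evalEP, sumC_cons]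
lemma evalEP_append (L M : List (ℂ × ℂ)) (x : ℝ) :
    evalEP (L ++ M) x = evalEP L x + evalEP M x := by
  simp [evalEP, sumC_append]

lemma sumC_conj (L : List (ℂ × ℂ)) (x : ℝ) :
    (starRingEnd ℂ) (sumC L x) =
      sumC (L.map (fun p => ((starRingEnd ℂ) p.1, (starRingEnd ℂ) p.2))) x := by
  induction L with
  | nil => simp [sumC]
  | cons p L ih =>
    simp only [List.map_cons, sumC_cons, map_add, map_mul, ih, ← Complex.exp_conj]
    congr 2
    simp

lemma sumC_row (p : ℂ × ℂ) (M : List (ℂ × ℂ)) (x : ℝ) :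
    sumC (M.flatMap (fun q =>
      [(p.1 * q.1 / 2, p.2 + q.2), (p.1 * (starRingEnd ℂ) q.1 / 2, p.2 + (starRingEnd ℂ) q.2)])) x
    = p.1 * Complex.exp (p.2 * x) * (sumC M x + (starRingEnd ℂ) (sumC M x)) / 2 := by
  induction M with
  | nil => simp [sumC]
  | cons q M ih =>
    simp only [List.flatMap_cons, sumC_append, sumC_cons, ih, map_add, map_mul]
    have h1 : Complex.exp ((p.2 + q.2) * x) = Complex.exp (p.2 * x) * Complex.exp (q.2 * x) := by
      rw [← Complex.exp_add]; ring_nf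
    have h2 : Complex.exp ((p.2 + (starRingEnd ℂ) q.2) * x)
        = Complex.exp (p.2 * x) * Complex.exp ((starRingEnd ℂ) q.2 * x) := by
      rw [← Complex.exp_add]; ring_nf
    have h3 : (starRingEnd ℂ) (Complex.exp (q.2 * x))
        = Complex.exp ((starRingEnd ℂ) q.2 * x) := by
      rw [← Complex.exp_conj]
      congr 1
      simp
    rw [sumC_nil, h1, h2, h3]
    ring

lemma sumC_mulL (L M : List (ℂ × ℂ)) (x : ℝ) :
    sumC (mulL L M) x = sumC L x * (sumC M x + (starRingEnd ℂ) (sumC M x)) / 2 := by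
  induction L with
  | nil => simp [mulL, sumC]
  | cons p L ih =>
    simp only [mulL] at ih ⊢
    rw [List.flatMap_cons, sumC_append, ih, sumC_row, sumC_cons]
    ring

lemma evalEP_mulL (L M : List (ℂ × ℂ)) (x : ℝ) :
    evalEP (mulL L M) x = evalEP L x * evalEP M x := by
  have h := sumC_mulL L M x
  have h2 : sumC M x + (starRingEnd ℂ) (sumC M x) = (2 * (sumC M x).re : ℝ) := by
    simp [Complex.ext_iff, Complex.add_re, Complex.conj_re]
    ring
  rw [evalEP, h, h2]
  · simp [evalEP, Complex.div_re]
    ring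


lemma hasDerivAt_term (c l : ℂ) (x : ℝ) :
    HasDerivAt (fun y : ℝ => (c * Complex.exp (l * y)).re)
      ((c * l * Complex.exp (l * x)).re) x := by
  have h0 : HasDerivAt (fun y : ℝ => (y : ℂ)) 1 x := by
    exact Complex.ofRealCLM.hasDerivAt (x := x)
  have h1 : HasDerivAt (fun y : ℝ => l * (y : ℂ)) l x := by
    simpa using h0.const_mul l
  have h2 := (h1.cexp).const_mul c
  have h3 := Complex.reCLM.hasFDerivAt.comp_hasDerivAt x h2
  simpa [Function.comp_def, mul_comm, mul_assoc, mul_left_comm] using h3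

lemma hasDerivAt_evalEP (L : List (ℂ × ℂ)) (x : ℝ) :
    HasDerivAt (evalEP L) (evalEP (derivL L) x) x := by
  induction L with
  | nil =>
    have he : evalEP ([] : List (ℂ × ℂ)) = fun _ => (0:ℝ) := by funext y; simp [evalEP, sumC]
    rw [he]; exact hasDerivAt_const x (0:ℝ)
  | cons p L ih =>
    have h := (hasDerivAt_term p.1 p.2 x).add ih
    have he : evalEP (p :: L) = fun y : ℝ => (p.1 * Complex.exp (p.2 * y)).re + evalEP L y := by
      funext y; exact evalEP_cons p L y
    rw [he, derivL, List.map_cons, evalEP_cons]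
    exact h

lemma deriv_evalEP (L : List (ℂ × ℂ)) : deriv (evalEP L) = evalEP (derivL L) := by
  funext x; exact (hasDerivAt_evalEP L x).deriv

lemma contDiff_evalEP (L : List (ℂ × ℂ)) : ContDiff ℝ (⊤ : ℕ∞) (evalEP L) := by
  induction L with
  | nil =>
    have : evalEP ([] : List (ℂ × ℂ)) = fun _ => (0:ℝ) := by
      funext y; simp [evalEP, sumC]
    rw [this]; exact contDiff_const
  | cons p L ih =>
    have he : evalEP (p :: L) = fun y : ℝ => (p.1 * Complex.exp (p.2 * y)).re + evalEP L y := by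
      funext y; exact evalEP_cons p L y
    rw [he]
    refine ContDiff.add ?_ ih
    have h1 : ContDiff ℝ (⊤ : ℕ∞) (fun y : ℝ => p.1 * Complex.exp (p.2 * y)) :=
      contDiff_const.mul (Complex.contDiff_exp.comp
        (contDiff_const.mul Complex.ofRealCLM.contDiff))
    exact Complex.reCLM.contDiff.comp h1

def absSum (L : List (ℂ × ℂ)) : ℝ := (L.map (fun p => ‖p.1‖)).sum

lemma absSum_nonneg (L : List (ℂ × ℂ)) : 0 ≤ absSum L := by
  induction L with
  | nil => simp [absSum]
  | cons p L ih =>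
    simp only [absSum, List.map_cons, List.sum_cons] at *
    positivity

lemma evalEP_bound (L : List (ℂ × ℂ)) (m : ℝ)
    (h : ∀ p ∈ L, |p.2.re| ≤ m) (x : ℝ) :
    |evalEP L x| ≤ absSum L * Real.exp (m * |x|) := by
  induction L with
  | nil => simp [evalEP, sumC, absSum]
  | cons p L ih =>
    have hp := h p (by simp)
    have hL : ∀ q ∈ L, |q.2.re| ≤ m := fun q hq => h q (by simp [hq])
    have ihL := ih hL
    have hterm : |(p.1 * Complex.exp (p.2 * x)).re| ≤ ‖p.1‖ * Real.exp (m * |x|) := by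
      calc |(p.1 * Complex.exp (p.2 * x)).re| ≤ ‖p.1 * Complex.exp (p.2 * x)‖ :=
            Complex.abs_re_le_norm _
        _ = ‖p.1‖ * Real.exp ((p.2 * x).re) := by
            rw [norm_mul, Complex.norm_exp]
        _ ≤ ‖p.1‖ * Real.exp (m * |x|) := by
            apply mul_le_mul_of_nonneg_left _ (norm_nonneg _)
            apply Real.exp_le_exp.2
            have : (p.2 * (x:ℂ)).re = p.2.re * x := by simp
            rw [this]
            calc p.2.re * x ≤ |p.2.re * x| := le_abs_self _
              _ = |p.2.re| * |x| := abs_mul _ _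
              _ ≤ m * |x| := mul_le_mul_of_nonneg_right hp (abs_nonneg _)
    calc |evalEP (p :: L) x| = |(p.1 * Complex.exp (p.2 * x)).re + evalEP L x| := by
          rw [evalEP_cons]
      _ ≤ |(p.1 * Complex.exp (p.2 * x)).re| + |evalEP L x| := abs_add_le _ _
      _ ≤ ‖p.1‖ * Real.exp (m * |x|) + absSum L * Real.exp (m * |x|) := by
          exact add_le_add hterm ihL
      _ = absSum (p :: L) * Real.exp (m * |x|) := by
          simp [absSum]; ring

lemma sumC_smulL (a : ℂ) (L : List (ℂ × ℂ)) (x : ℝ) :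
    sumC (smulL a L) x = a * sumC L x := by
  induction L with
  | nil => simp [smulL, sumC]
  | cons p L ih => simp only [smulL, List.map_cons, sumC_cons] at *; rw [ih]; ring

lemma evalEP_smulL (r : ℝ) (L : List (ℂ × ℂ)) (x : ℝ) :
    evalEP (smulL (r : ℂ) L) x = r * evalEP L x := by
  rw [evalEP, sumC_smulL]
  simp [evalEP]

lemma exps_derivL {L : List (ℂ × ℂ)} {P : ℂ → Prop} (h : ∀ p ∈ L, P p.2) :
    ∀ p ∈ derivL L, P p.2 := by
  intro p hp
  simp only [derivL, List.mem_map] at hp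
  obtain ⟨q, hq, rfl⟩ := hp
  exact h q hq

lemma exps_smulL {L : List (ℂ × ℂ)} {a : ℂ} {P : ℂ → Prop} (h : ∀ p ∈ L, P p.2) :
    ∀ p ∈ smulL a L, P p.2 := by
  intro p hp
  simp only [smulL, List.mem_map] at hp
  obtain ⟨q, hq, rfl⟩ := hp
  exact h q hq

lemma exps_append {L M : List (ℂ × ℂ)} {P : ℂ → Prop}
    (hL : ∀ p ∈ L, P p.2) (hM : ∀ p ∈ M, P p.2) :
    ∀ p ∈ L ++ M, P p.2 := by
  intro p hp
  rcases List.mem_append.1 hp with h | h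
  exacts [hL p h, hM p h]

lemma exps_mulL {L M : List (ℂ × ℂ)} {t m : ℝ}
    (hL : ∀ p ∈ L, p.2.re = t) (hM : ∀ q ∈ M, |q.2.re + t| ≤ m) :
    ∀ p ∈ mulL L M, |p.2.re| ≤ m := by
  intro p hp
  simp only [mulL, List.mem_flatMap] at hp
  obtain ⟨a, ha, hp⟩ := hp
  obtain ⟨q, hq, hp⟩ := hp
  have hare := hL a ha
  have hqre := hM q hq
  simp only [List.mem_cons, List.mem_singleton] at hp
  rcases hp with rfl | rfl | h
  · simpa [Complex.add_re, hare, add_comm] using hqre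
  · simpa [Complex.add_re, Complex.conj_re, hare, add_comm] using hqre
  · exact absurd h List.not_mem_nil

lemma exps_mulL' {L M : List (ℂ × ℂ)} {m1 m2 : ℝ}
    (hL : ∀ p ∈ L, |p.2.re| ≤ m1) (hM : ∀ q ∈ M, |q.2.re| ≤ m2) :
    ∀ p ∈ mulL L M, |p.2.re| ≤ m1 + m2 := by
  intro p hp
  simp only [mulL, List.mem_flatMap] at hp
  obtain ⟨a, ha, hp⟩ := hp
  obtain ⟨q, hq, hp⟩ := hp
  have hare := hL a ha
  have hqre := hM q hq
  simp only [List.mem_cons, List.mem_singleton] at hp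
  rcases hp with rfl | rfl | h
  · calc |(a.2 + q.2).re| = |a.2.re + q.2.re| := by rw [Complex.add_re]
      _ ≤ |a.2.re| + |q.2.re| := abs_add_le _ _
      _ ≤ m1 + m2 := add_le_add hare hqre
  · have he : (a.2 + (starRingEnd ℂ) q.2).re = a.2.re + q.2.re := by
      rw [Complex.add_re, Complex.conj_re]
    rw [he]
    calc |a.2.re + q.2.re| ≤ |a.2.re| + |q.2.re| := abs_add_le _ _
      _ ≤ m1 + m2 := add_le_add hare hqre
  · exact absurd h List.not_mem_nil

lemma evalEP_derivL_realexp (c : ℂ) (b : ℝ) (x : ℝ) :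
    evalEP (derivL [(c, (b:ℂ))]) x = b * evalEP [(c, (b:ℂ))] x := by
  simp only [derivL, List.map_cons, List.map_nil, evalEP, sumC_cons, sumC_nil]
  have : c * (b:ℂ) * Complex.exp ((b:ℂ) * x) = (b:ℂ) * (c * Complex.exp ((b:ℂ) * x)) := by ring
  rw [this, add_zero, add_zero]
  simp [Complex.mul_re]

lemma evalEP_expTerm (A b x : ℝ) :
    evalEP [(((A:ℝ):ℂ), ((b:ℝ):ℂ))] x = A * Real.exp (b * x) := by
  simp only [evalEP, sumC_cons, sumC_nil, add_zero]
  rw [← Complex.ofReal_mul, ← Complex.ofReal_exp, ← Complex.ofReal_mul]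
  exact Complex.ofReal_re _

lemma evalEP_cosTerm (A θ a x : ℝ) :
    evalEP [((A:ℂ) * Complex.exp (Complex.I * θ), Complex.I * a)] x
      = A * Real.cos (θ + a * x) := by
  simp only [evalEP, sumC_cons, sumC_nil, add_zero]
  rw [mul_assoc, ← Complex.exp_add]
  have h1 : Complex.I * (θ:ℂ) + Complex.I * (a:ℂ) * (x:ℝ) = ((θ + a*x : ℝ):ℂ) * Complex.I := by
    push_cast; ring
  rw [h1, Complex.exp_mul_I]
  simp [Complex.mul_re, Complex.mul_im, ← Complex.ofReal_mul, ← Complex.ofReal_add,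
    Complex.cos_ofReal_re, Complex.cos_ofReal_im, Complex.sin_ofReal_re, Complex.sin_ofReal_im]

lemma evalEP_sinTerm (A θ a x : ℝ) :
    evalEP [((A:ℂ) * -Complex.I * Complex.exp (Complex.I * θ), Complex.I * a)] x
      = A * Real.sin (θ + a * x) := by
  simp only [evalEP, sumC_cons, sumC_nil, add_zero]
  rw [mul_assoc, mul_assoc, ← Complex.exp_add]
  have h1 : Complex.I * (θ:ℂ) + Complex.I * (a:ℂ) * (x:ℝ) = ((θ + a*x : ℝ):ℂ) * Complex.I := by
    push_cast; ring
  rw [h1, Complex.exp_mul_I]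
  simp [Complex.mul_re, Complex.mul_im, ← Complex.ofReal_mul, ← Complex.ofReal_add,
    Complex.cos_ofReal_re, Complex.cos_ofReal_im, Complex.sin_ofReal_re, Complex.sin_ofReal_im]

open Real

namespace GardnerEP

noncomputable def Lg (α β μ c₁ c₂ : ℝ) : List (ℂ × ℂ) :=
  [(((-(2 * β * μ / (α ^ 2 + β ^ 2 - 4 * μ ^ 2)) * Real.exp (β * c₂) : ℝ) : ℂ), ((β : ℝ) : ℂ))]

noncomputable def Lh (α β μ c₁ c₂ : ℝ) : List (ℂ × ℂ) :=
  [(((β * Real.sqrt (α ^ 2 + β ^ 2) / (α * Real.sqrt (α ^ 2 + β ^ 2 - 4 * μ ^ 2)) : ℝ) : ℂ)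
      * -Complex.I * Complex.exp (Complex.I * ((α * c₁ : ℝ) : ℂ)), Complex.I * ((α : ℝ) : ℂ))]

noncomputable def Lf (α β μ c₁ c₂ : ℝ) : List (ℂ × ℂ) :=
  [(((Real.exp (β * c₂) / 2 : ℝ) : ℂ), ((β : ℝ) : ℂ))]

noncomputable def Lk (α β μ c₁ c₂ : ℝ) : List (ℂ × ℂ) :=
  [(((Real.exp (-(β * c₂)) / 2 : ℝ) : ℂ), ((-β : ℝ) : ℂ)),
   (((-(2 * β * μ / (α * Real.sqrt (α ^ 2 + β ^ 2 - 4 * μ ^ 2) * Real.sqrt (α ^ 2 + β ^ 2)) * α) : ℝ) : ℂ)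
      * Complex.exp (Complex.I * ((α * c₁ : ℝ) : ℂ)), Complex.I * ((α : ℝ) : ℂ)),
   (((2 * β * μ / (α * Real.sqrt (α ^ 2 + β ^ 2 - 4 * μ ^ 2) * Real.sqrt (α ^ 2 + β ^ 2)) * β : ℝ) : ℂ)
      * -Complex.I * Complex.exp (Complex.I * ((α * c₁ : ℝ) : ℂ)), Complex.I * ((α : ℝ) : ℂ))]

noncomputable def LG (α β μ c₁ c₂ : ℝ) : List (ℂ × ℂ) := Lh α β μ c₁ c₂ ++ Lg α β μ c₁ c₂
noncomputable def LF (α β μ c₁ c₂ : ℝ) : List (ℂ × ℂ) := Lf α β μ c₁ c₂ ++ Lk α β μ c₁ c₂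

lemma hGeval (α β μ c₁ c₂ : ℝ) : ∀ x : ℝ, gardnerG α β μ c₁ c₂ x = evalEP (LG α β μ c₁ c₂) x := by
  intro x
  rw [LG, evalEP_append, Lh, Lg, evalEP_sinTerm, evalEP_expTerm, gardnerG]
  rw [show α * c₁ + α * x = α * (x + c₁) by ring]
  rw [show β * (x + c₂) = β * c₂ + β * x by ring, Real.exp_add]
  ring

lemma hFeval (α β μ c₁ c₂ : ℝ) : ∀ x : ℝ, gardnerF α β μ c₁ c₂ x = evalEP (LF α β μ c₁ c₂) x := by
  intro x
  rw [LF, evalEP_append, Lf, evalEP_expTerm, Lk]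
  rw [show ((((Real.exp (-(β * c₂)) / 2 : ℝ) : ℂ), ((-β : ℝ) : ℂ)) ::
      [(((-(2 * β * μ / (α * Real.sqrt (α ^ 2 + β ^ 2 - 4 * μ ^ 2) * Real.sqrt (α ^ 2 + β ^ 2)) * α) : ℝ) : ℂ)
        * Complex.exp (Complex.I * ((α * c₁ : ℝ) : ℂ)), Complex.I * ((α : ℝ) : ℂ)),
       (((2 * β * μ / (α * Real.sqrt (α ^ 2 + β ^ 2 - 4 * μ ^ 2) * Real.sqrt (α ^ 2 + β ^ 2)) * β : ℝ) : ℂ)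
        * -Complex.I * Complex.exp (Complex.I * ((α * c₁ : ℝ) : ℂ)), Complex.I * ((α : ℝ) : ℂ))]) =
      [(((Real.exp (-(β * c₂)) / 2 : ℝ) : ℂ), ((-β : ℝ) : ℂ))] ++
      [(((-(2 * β * μ / (α * Real.sqrt (α ^ 2 + β ^ 2 - 4 * μ ^ 2) * Real.sqrt (α ^ 2 + β ^ 2)) * α) : ℝ) : ℂ)
        * Complex.exp (Complex.I * ((α * c₁ : ℝ) : ℂ)), Complex.I * ((α : ℝ) : ℂ))] ++
      [(((2 * β * μ / (α * Real.sqrt (α ^ 2 + β ^ 2 - 4 * μ ^ 2) * Real.sqrt (α ^ 2 + β ^ 2)) * β : ℝ) : ℂ)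
        * -Complex.I * Complex.exp (Complex.I * ((α * c₁ : ℝ) : ℂ)), Complex.I * ((α : ℝ) : ℂ))] from rfl]
  rw [evalEP_append, evalEP_append, evalEP_expTerm, evalEP_cosTerm, evalEP_sinTerm, gardnerF]
  rw [show α * c₁ + α * x = α * (x + c₁) by ring]
  rw [Real.cosh_eq, show β * (x + c₂) = β * c₂ + β * x by ring, Real.exp_add,
    show -(β * c₂ + β * x) = -(β*c₂) + -β * x by ring, Real.exp_add]
  ring

end GardnerEP

namespace GardnerEP

noncomputable def LN (α β μ c₁ c₂ : ℝ) : List (ℂ × ℂ) :=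
  smulL ((2:ℝ) : ℂ)
    (mulL (derivL (Lg α β μ c₁ c₂)) (Lk α β μ c₁ c₂)
      ++ smulL (((-1 : ℝ) : ℂ)) (mulL (Lg α β μ c₁ c₂) (derivL (Lk α β μ c₁ c₂)))
      ++ mulL (derivL (Lh α β μ c₁ c₂)) (LF α β μ c₁ c₂)
      ++ smulL (((-1 : ℝ) : ℂ)) (mulL (Lh α β μ c₁ c₂) (derivL (LF α β μ c₁ c₂))))

noncomputable def LQ (α β μ c₁ c₂ : ℝ) : List (ℂ × ℂ) :=
  mulL (LF α β μ c₁ c₂) (LF α β μ c₁ c₂) ++ mulL (LG α β μ c₁ c₂) (LG α β μ c₁ c₂)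

lemma cancel_gf (α β μ c₁ c₂ : ℝ) (x : ℝ) :
    evalEP (derivL (Lg α β μ c₁ c₂)) x * evalEP (Lf α β μ c₁ c₂) x
      - evalEP (Lg α β μ c₁ c₂) x * evalEP (derivL (Lf α β μ c₁ c₂)) x = 0 := by
  rw [Lg, Lf, evalEP_derivL_realexp, evalEP_derivL_realexp]
  ring

lemma hNeval (α β μ c₁ c₂ : ℝ) (x : ℝ) :
    2 * (evalEP (derivL (LG α β μ c₁ c₂)) x * evalEP (LF α β μ c₁ c₂) x
      - evalEP (LG α β μ c₁ c₂) x * evalEP (derivL (LF α β μ c₁ c₂)) x)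
    = evalEP (LN α β μ c₁ c₂) x := by
  have hder : ∀ L M : List (ℂ × ℂ), derivL (L ++ M) = derivL L ++ derivL M := by
    intro L M; simp [derivL]
  have hc := cancel_gf α β μ c₁ c₂ x
  simp only [LN, LG, LF, hder, evalEP_smulL, evalEP_append, evalEP_mulL] at hc ⊢
  linear_combination (2:ℝ) * hc

lemma exps_LF (α β μ c₁ c₂ : ℝ) : ∀ p ∈ LF α β μ c₁ c₂, |p.2.re| ≤ |β| := by
  intro p hp
  simp only [LF, Lf, Lk, List.mem_append, List.mem_cons, List.mem_singleton] at hp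
  rcases hp with (rfl | h) | rfl | rfl | rfl | h
  · simp
  · exact absurd h List.not_mem_nil
  · simp [abs_neg]
  · simp
  · simp
  · exact absurd h List.not_mem_nil

lemma exps_LG (α β μ c₁ c₂ : ℝ) : ∀ p ∈ LG α β μ c₁ c₂, |p.2.re| ≤ |β| := by
  intro p hp
  simp only [LG, Lh, Lg, List.mem_append, List.mem_cons, List.mem_singleton] at hp
  rcases hp with (rfl | h) | rfl | h
  · simp
  · exact absurd h List.not_mem_nil
  · simp
  · exact absurd h List.not_mem_nil

lemma exps_LN (α β μ c₁ c₂ : ℝ) : ∀ p ∈ LN α β μ c₁ c₂, |p.2.re| ≤ |β| := by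
  unfold LN
  apply exps_smulL (P := fun z => |z.re| ≤ |β|)
  have hLg : ∀ p ∈ Lg α β μ c₁ c₂, p.2.re = β := by
    intro p hp
    simp only [Lg, List.mem_singleton] at hp
    rw [hp]
    simp
  have hLh : ∀ p ∈ Lh α β μ c₁ c₂, p.2.re = (0:ℝ) := by
    intro p hp
    simp only [Lh, List.mem_singleton] at hp
    rw [hp]
    simp
  have hLk : ∀ q ∈ Lk α β μ c₁ c₂, |q.2.re + β| ≤ |β| := by
    intro q hq
    simp only [Lk, List.mem_cons, List.mem_singleton] at hq
    rcases hq with rfl | rfl | rfl | h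
    · simp
    · simp [abs_le, le_abs_self, neg_abs_le]
    · simp [abs_le, le_abs_self, neg_abs_le]
    · exact absurd h List.not_mem_nil
  have hLF : ∀ q ∈ LF α β μ c₁ c₂, |q.2.re + 0| ≤ |β| := by
    intro q hq
    rw [add_zero]
    exact exps_LF α β μ c₁ c₂ q hq
  apply exps_append (P := fun z => |z.re| ≤ |β|)
  apply exps_append (P := fun z => |z.re| ≤ |β|)
  apply exps_append (P := fun z => |z.re| ≤ |β|)
  · exact exps_mulL (exps_derivL (P := fun z => z.re = β) hLg) hLk
  · exact exps_smulL (P := fun z => |z.re| ≤ |β|) (exps_mulL hLg (exps_derivL (P := fun z => |z.re + β| ≤ |β|) hLk))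
  · exact exps_mulL (exps_derivL (P := fun z => z.re = 0) hLh) hLF
  · exact exps_smulL (P := fun z => |z.re| ≤ |β|) (exps_mulL hLh (exps_derivL (P := fun z => |z.re + 0| ≤ |β|) hLF))

lemma exps_LQ (α β μ c₁ c₂ : ℝ) : ∀ p ∈ LQ α β μ c₁ c₂, |p.2.re| ≤ 2 * |β| := by
  unfold LQ
  apply exps_append (P := fun z => |z.re| ≤ 2*|β|)
  · have := exps_mulL' (exps_LF α β μ c₁ c₂) (exps_LF α β μ c₁ c₂)
    intro p hp
    have h := this p hp
    linarith [h]
  · have := exps_mulL' (exps_LG α β μ c₁ c₂) (exps_LG α β μ c₁ c₂)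
    intro p hp
    have h := this p hp
    linarith [h]

end GardnerEP
lemma gardner_pos (α β μ : ℝ) (hα : α ≠ 0) (hβ : β ≠ 0) (hμ : 0 < μ)
    (hΔ : 0 < α ^ 2 + β ^ 2 - 4 * μ ^ 2) (s c E : ℝ) (hsc : s^2 + c^2 = 1) (hE : 0 < E)
    (hG : β * Real.sqrt (α ^ 2 + β ^ 2) / (α * Real.sqrt (α ^ 2 + β ^ 2 - 4 * μ ^ 2)) * s
      - 2 * β * μ / (α ^ 2 + β ^ 2 - 4 * μ ^ 2) * E = 0)
    (hF : (E + 1/E)/2 - 2 * β * μ / (α * Real.sqrt (α ^ 2 + β ^ 2 - 4 * μ ^ 2) * Real.sqrt (α ^ 2 + β ^ 2)) * (α * c - β * s) = 0) :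
    False := by
  set d := Real.sqrt (α ^ 2 + β ^ 2 - 4 * μ ^ 2) with hd
  set r := Real.sqrt (α ^ 2 + β ^ 2) with hr
  have hd2 : d ^ 2 = α ^ 2 + β ^ 2 - 4 * μ ^ 2 := Real.sq_sqrt hΔ.le
  have hr2 : r ^ 2 = α ^ 2 + β ^ 2 := Real.sq_sqrt (by positivity)
  have hdpos : 0 < d := Real.sqrt_pos.2 hΔ
  have hrpos : 0 < r := Real.sqrt_pos.2 (by positivity)
  have hG' : β * r / (α * d) * s - 2 * β * μ / d ^ 2 * E = 0 := by rw [hd2]; exact hG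
  have h1 : β * r * s * d ^ 2 - α * d * (2 * β * μ * E) = 0 := by
    field_simp at hG'
    linear_combination d * hG'
  have eq1 : r * d * s = 2 * α * μ * E := by
    have h2 : (β * d) * (r * d * s - 2 * α * μ * E) = 0 := by linear_combination h1
    rcases mul_eq_zero.1 h2 with h | h
    · exact absurd h (mul_ne_zero hβ hdpos.ne')
    · linarith
  have hs : s ≠ 0 := by
    intro h0
    rw [h0, mul_zero] at eq1
    exact (mul_ne_zero (mul_ne_zero (mul_ne_zero two_ne_zero hα) hμ.ne') hE.ne') eq1.symm
  have eq2 : α * d * r * (E^2 + 1) = 4 * β * μ * (α * c - β * s) * E := by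
    have h := hF
    field_simp at h
    linarith [h]
  have hE' : E = r * d * s / (2 * α * μ) := by
    field_simp
    linarith [eq1]
  rw [hE'] at eq2
  field_simp at eq2
  have key : r^2 * d^2 * s^2 + 4*α^2*μ^2 - (8*α*β*μ^2*s*c - 8*β^2*μ^2*s^2) = 0 := by
    have h3 : (α * d * r * (2 * α * μ)) *
        (r^2 * d^2 * s^2 + 4*α^2*μ^2 - (8*α*β*μ^2*s*c - 8*β^2*μ^2*s^2)) = 0 := by
      linear_combination (α * d * r * (2 * α * μ)) * eq2
    rcases mul_eq_zero.1 h3 with h | h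
    · exact absurd h (mul_ne_zero (mul_ne_zero (mul_ne_zero hα hdpos.ne') hrpos.ne')
        (mul_ne_zero (mul_ne_zero two_ne_zero hα) hμ.ne'))
    · exact h
  have hs2 : 0 < s ^ 2 := (sq_nonneg s).lt_of_ne (Ne.symm (pow_ne_zero 2 hs))
  nlinarith [key, sq_nonneg (2*α*μ*c - 2*β*μ*s), hsc, hs2,
    mul_pos (mul_pos (mul_pos hrpos hrpos) (mul_pos hdpos hdpos)) hs2,
    mul_pos (mul_pos hμ hμ) hs2, sq_nonneg (β*μ*s), sq_nonneg (α*μ)]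

lemma gardner_Qpos (α β μ c₁ c₂ : ℝ) (hα : α ≠ 0) (hβ : β ≠ 0) (hμ : 0 < μ)
    (hΔ : 0 < α ^ 2 + β ^ 2 - 4 * μ ^ 2) (x : ℝ) :
    0 < gardnerF α β μ c₁ c₂ x ^ 2 + gardnerG α β μ c₁ c₂ x ^ 2 := by
  rcases lt_or_eq_of_le (by positivity : (0:ℝ) ≤ gardnerF α β μ c₁ c₂ x ^ 2 + gardnerG α β μ c₁ c₂ x ^ 2) with h | h
  · exact h
  exfalso
  have hF0 : gardnerF α β μ c₁ c₂ x = 0 := by nlinarith [sq_nonneg (gardnerF α β μ c₁ c₂ x), sq_nonneg (gardnerG α β μ c₁ c₂ x)]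
  have hG0 : gardnerG α β μ c₁ c₂ x = 0 := by nlinarith [sq_nonneg (gardnerF α β μ c₁ c₂ x), sq_nonneg (gardnerG α β μ c₁ c₂ x)]
  set s := Real.sin (α * (x + c₁))
  set c := Real.cos (α * (x + c₁))
  set E := Real.exp (β * (x + c₂))
  have hE : 0 < E := Real.exp_pos _
  have hsc : s ^ 2 + c ^ 2 = 1 := Real.sin_sq_add_cos_sq _
  apply gardner_pos α β μ hα hβ hμ hΔ s c E hsc hE
  · rw [gardnerG] at hG0
    exact hG0
  · rw [gardnerF] at hF0
    have hcosh : Real.cosh (β * (x + c₂)) = (E + 1/E)/2 := by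
      rw [Real.cosh_eq, Real.exp_neg]
      field_simp
      rw [show rexp (β * (x + c₂)) = E from rfl]; ring
    rw [hcosh] at hF0
    exact hF0

set_option maxHeartbeats 1000000 in
lemma gardner_Qlow (α β μ c₁ c₂ : ℝ) (hα : α ≠ 0) (hβ : β ≠ 0) (hμ : 0 < μ)
    (hΔ : 0 < α ^ 2 + β ^ 2 - 4 * μ ^ 2) :
    ∃ q : ℝ, 0 < q ∧ ∀ x : ℝ,
      q * Real.exp (2 * |β| * |x|) ≤ gardnerF α β μ c₁ c₂ x ^ 2 + gardnerG α β μ c₁ c₂ x ^ 2 := by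
  set F := gardnerF α β μ c₁ c₂ with hFdef
  set G := gardnerG α β μ c₁ c₂ with hGdef
  set Q : ℝ → ℝ := fun x => F x ^ 2 + G x ^ 2 with hQdef
  have hQpos : ∀ x, 0 < Q x := fun x => gardner_Qpos α β μ c₁ c₂ hα hβ hμ hΔ x
  set a₃ : ℝ := 2 * β * μ / (α * Real.sqrt (α ^ 2 + β ^ 2 - 4 * μ ^ 2) * Real.sqrt (α ^ 2 + β ^ 2)) with ha3
  set M : ℝ := |a₃| * (|α| + |β|) + 1 with hM
  have hM1 : 1 ≤ M := by
    have : 0 ≤ |a₃| * (|α| + |β|) := by positivity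
    linarith
  have hMpos : 0 < M := by linarith
  -- trig part of F bounded by M - 1 < M
  have htrig : ∀ x : ℝ, |a₃ * (α * Real.cos (α * (x + c₁)) - β * Real.sin (α * (x + c₁)))| ≤ M - 1 := by
    intro x
    rw [abs_mul, hM]
    have h1 : |α * Real.cos (α * (x + c₁)) - β * Real.sin (α * (x + c₁))| ≤ |α| + |β| := by
      calc |α * Real.cos (α * (x + c₁)) - β * Real.sin (α * (x + c₁))|
          ≤ |α * Real.cos (α * (x + c₁))| + |β * Real.sin (α * (x + c₁))| := abs_sub _ _
        _ = |α| * |Real.cos (α * (x + c₁))| + |β| * |Real.sin (α * (x + c₁))| := by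
            rw [abs_mul, abs_mul]
        _ ≤ |α| * 1 + |β| * 1 := by
            gcongr
            · exact Real.abs_cos_le_one _
            · exact Real.abs_sin_le_one _
        _ = |α| + |β| := by ring
    calc |a₃| * |α * Real.cos (α * (x + c₁)) - β * Real.sin (α * (x + c₁))|
        ≤ |a₃| * (|α| + |β|) := by gcongr
      _ = |a₃| * (|α| + |β|) + 1 - 1 := by ring
  -- F ≥ cosh - M always
  have hFge : ∀ x : ℝ, Real.cosh (β * (x + c₂)) - M ≤ F x := by
    intro x
    rw [hFdef, gardnerF, ← ha3]
    have := htrig x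
    have h2 := neg_abs_le (a₃ * (α * Real.cos (α * (x + c₁)) - β * Real.sin (α * (x + c₁))))
    linarith [le_abs_self (a₃ * (α * Real.cos (α * (x + c₁)) - β * Real.sin (α * (x + c₁))))]
  -- cosh lower bound by exp
  have hcosh_exp : ∀ t : ℝ, Real.exp |t| / 2 ≤ Real.cosh t := by
    intro t
    rw [Real.cosh_eq]
    rcases abs_cases t with ⟨h1, _⟩ | ⟨h1, _⟩ <;> rw [h1] <;>
      [linarith [Real.exp_pos (-t)]; linarith [Real.exp_pos t]]
  -- the continuity of Q
  have hQcont : Continuous Q := by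
    have hFc : Continuous F := by
      have : F = evalEP (GardnerEP.LF α β μ c₁ c₂) := funext (GardnerEP.hFeval α β μ c₁ c₂)
      rw [this]
      exact (contDiff_evalEP _).continuous
    have hGc : Continuous G := by
      have : G = evalEP (GardnerEP.LG α β μ c₁ c₂) := funext (GardnerEP.hGeval α β μ c₁ c₂)
      rw [this]
      exact (contDiff_evalEP _).continuous
    exact (hFc.pow 2).add (hGc.pow 2)
  -- min on compact interval
  set R : ℝ := Real.log (4 * M) / |β| + |c₂| with hR
  have hRpos : 0 ≤ R := by
    have hlog : 0 ≤ Real.log (4 * M) := Real.log_nonneg (by linarith)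
    have : 0 ≤ Real.log (4 * M) / |β| := div_nonneg hlog (abs_nonneg _)
    positivity
  obtain ⟨x₀, _, hmin⟩ := (isCompact_Icc (a := -R) (b := R)).exists_isMinOn
    (Set.nonempty_Icc.2 (by linarith)) hQcont.continuousOn
  set q₁ : ℝ := Q x₀ with hq1
  have hq1pos : 0 < q₁ := hQpos x₀
  -- main pointwise bound : Q x ≥ q₂ * cosh²
  set q₂ : ℝ := min (1/4 : ℝ) (q₁ / (4 * M ^ 2)) with hq2
  have hq2pos : 0 < q₂ := lt_min (by norm_num) (by positivity)
  have hkey : ∀ x : ℝ, q₂ * Real.cosh (β * (x + c₂)) ^ 2 ≤ Q x := by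
    intro x
    rcases le_or_gt (2 * M) (Real.cosh (β * (x + c₂))) with hbig | hsmall
    · -- F ≥ cosh/2
      have h1 : Real.cosh (β * (x + c₂)) / 2 ≤ F x := by
        have := hFge x
        linarith
      have h2 : 0 ≤ Real.cosh (β * (x + c₂)) / 2 := by positivity
      have h3 : (Real.cosh (β * (x + c₂)) / 2) ^ 2 ≤ F x ^ 2 := by
        apply sq_le_sq' <;> nlinarith
      have h4 : q₂ ≤ 1/4 := min_le_left _ _
      have h5 : 0 ≤ Real.cosh (β * (x + c₂)) ^ 2 := sq_nonneg _
      have hQx : Q x = F x ^ 2 + G x ^ 2 := rfl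
      nlinarith [sq_nonneg (G x), hQx, mul_le_mul_of_nonneg_right h4 h5]
    · -- x in the compact interval
      have hxR : x ∈ Set.Icc (-R) R := by
        have ht : Real.exp |β * (x + c₂)| / 2 < 2 * M := lt_of_le_of_lt (hcosh_exp _) hsmall
        have ht2 : Real.exp |β * (x + c₂)| < 4 * M := by linarith
        have ht3 : |β * (x + c₂)| < Real.log (4 * M) := by
          rw [← Real.exp_lt_exp (y := Real.log (4 * M))] at *
          rwa [Real.exp_log (by linarith)]
        rw [abs_mul] at ht3
        have hβa : 0 < |β| := abs_pos.2 hβ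
        have ht4 : |x + c₂| < Real.log (4 * M) / |β| := by
          rw [lt_div_iff₀ hβa]
          linarith [mul_comm (|β|) (|x + c₂|)]
        have ht5 : |x| ≤ |x + c₂| + |c₂| := by
          simpa using abs_add_le (x + c₂) (-c₂)
        have hxabs : |x| ≤ R := by
          rw [hR]
          linarith [ht4.le, ht5]
        exact ⟨(abs_le.1 hxabs).1, (abs_le.1 hxabs).2⟩
      have h1 : q₁ ≤ Q x := hmin hxR
      have h2 : Real.cosh (β * (x + c₂)) ^ 2 ≤ 4 * M ^ 2 := by
        have h0 : 0 < Real.cosh (β * (x + c₂)) := Real.cosh_pos _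
        nlinarith
      have h4 : q₂ ≤ q₁ / (4 * M ^ 2) := min_le_right _ _
      have h5 : 0 < 4 * M ^ 2 := by positivity
      calc q₂ * Real.cosh (β * (x + c₂)) ^ 2 ≤ (q₁ / (4 * M ^ 2)) * (4 * M ^ 2) := by
            apply mul_le_mul h4 h2 (sq_nonneg _) (by positivity)
        _ = q₁ := by field_simp
        _ ≤ Q x := h1
  -- convert cosh² ≥ exp(2|β||x|) * const
  refine ⟨q₂ * Real.exp (-(2 * |β| * |c₂|)) / 4, by positivity, ?_⟩
  intro x
  have h1 : Real.exp (|β| * |x| - |β| * |c₂|) / 2 ≤ Real.cosh (β * (x + c₂)) := by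
    refine le_trans ?_ (hcosh_exp (β * (x + c₂)))
    have h2 : |β| * |x| - |β| * |c₂| ≤ |β * (x + c₂)| := by
      rw [abs_mul]
      have : |x| - |c₂| ≤ |x + c₂| := by
        have := abs_sub_abs_le_abs_sub x (-c₂)
        simp only [sub_neg_eq_add, abs_neg] at this
        linarith
      nlinarith [abs_nonneg β, abs_nonneg (x + c₂)]
    gcongr
  have h3 : 0 ≤ Real.exp (|β| * |x| - |β| * |c₂|) / 2 := by positivity
  have h4 : (Real.exp (|β| * |x| - |β| * |c₂|) / 2) ^ 2 ≤ Real.cosh (β * (x + c₂)) ^ 2 := by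
    have hc0 : 0 < Real.cosh (β * (x + c₂)) := Real.cosh_pos _
    apply sq_le_sq' <;> nlinarith
  have h7 : (Real.exp (|β| * |x| - |β| * |c₂|))^2
      = Real.exp (2 * |β| * |x|) * Real.exp (-(2 * |β| * |c₂|)) := by
    rw [sq, ← Real.exp_add, ← Real.exp_add]
    congr 1
    ring
  calc q₂ * Real.exp (-(2 * |β| * |c₂|)) / 4 * Real.exp (2 * |β| * |x|)
      = q₂ * ((Real.exp (|β| * |x| - |β| * |c₂|) / 2) ^ 2) := by
        rw [div_pow, h7]; ring
    _ ≤ q₂ * Real.cosh (β * (x + c₂)) ^ 2 := mul_le_mul_of_nonneg_left h4 hq2pos.le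
    _ ≤ Q x := hkey x

namespace GardnerEP

lemma hQeval (α β μ c₁ c₂ : ℝ) (x : ℝ) :
    gardnerF α β μ c₁ c₂ x ^ 2 + gardnerG α β μ c₁ c₂ x ^ 2 = evalEP (LQ α β μ c₁ c₂) x := by
  rw [LQ, evalEP_append, evalEP_mulL, evalEP_mulL, ← hFeval, ← hGeval]
  ring

lemma gardnerB_eq (α β μ c₁ c₂ : ℝ) :
    gardnerB α β μ c₁ c₂
      = fun x => evalEP (LN α β μ c₁ c₂) x / evalEP (LQ α β μ c₁ c₂) x ^ (0 + 1) := by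
  funext x
  have hGfun : gardnerG α β μ c₁ c₂ = evalEP (LG α β μ c₁ c₂) := funext (hGeval α β μ c₁ c₂)
  have hFfun : gardnerF α β μ c₁ c₂ = evalEP (LF α β μ c₁ c₂) := funext (hFeval α β μ c₁ c₂)
  rw [gardnerB, hQeval α β μ c₁ c₂ x, hGfun, hFfun, deriv_evalEP, deriv_evalEP, hNeval]
  norm_num

lemma iter_rep (α β μ c₁ c₂ : ℝ) (hα : α ≠ 0) (hβ : β ≠ 0) (hμ : 0 < μ)
    (hΔ : 0 < α ^ 2 + β ^ 2 - 4 * μ ^ 2) (n : ℕ) :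
    ∃ L : List (ℂ × ℂ), (∀ p ∈ L, |p.2.re| ≤ (2 * (n:ℝ) + 1) * |β|) ∧
      iteratedDeriv n (gardnerB α β μ c₁ c₂)
        = fun x => evalEP L x / evalEP (LQ α β μ c₁ c₂) x ^ (n + 1) := by
  have hQne : ∀ x : ℝ, evalEP (LQ α β μ c₁ c₂) x ≠ 0 := by
    intro x
    rw [← hQeval]
    exact (gardner_Qpos α β μ c₁ c₂ hα hβ hμ hΔ x).ne'
  induction n with
  | zero =>
    refine ⟨LN α β μ c₁ c₂, ?_, ?_⟩
    · intro p hp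
      have := exps_LN α β μ c₁ c₂ p hp
      have hb : (0:ℝ) ≤ |β| := abs_nonneg _
      push_cast
      linarith
    · rw [iteratedDeriv_zero]
      exact gardnerB_eq α β μ c₁ c₂
  | succ n ih =>
    obtain ⟨L, hLb, hLr⟩ := ih
    refine ⟨mulL (derivL L) (LQ α β μ c₁ c₂)
        ++ smulL (((-((n:ℝ) + 1)) : ℝ) : ℂ) (mulL L (derivL (LQ α β μ c₁ c₂))), ?_, ?_⟩
    · push_cast
      apply exps_append (P := fun z => |z.re| ≤ (2 * ((n:ℝ)+1) + 1) * |β|)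
      · intro p hp
        have := exps_mulL' (exps_derivL (P := fun z => |z.re| ≤ (2*(n:ℝ)+1)*|β|) hLb)
          (exps_LQ α β μ c₁ c₂) p hp
        push_cast at *
        linarith
      · apply exps_smulL (P := fun z => |z.re| ≤ (2 * ((n:ℝ)+1) + 1) * |β|)
        intro p hp
        have := exps_mulL' hLb (exps_derivL (P := fun z => |z.re| ≤ 2*|β|) (exps_LQ α β μ c₁ c₂)) p hp
        push_cast at *
        linarith
    · rw [iteratedDeriv_succ, hLr]
      funext x
      have h1 := hasDerivAt_evalEP L x
      have h2 := (hasDerivAt_evalEP (LQ α β μ c₁ c₂) x).pow (n+1)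
      have h3 := h1.div h2 (pow_ne_zero (n+1) (hQne x))
      rw [show (fun x => evalEP L x / evalEP (LQ α β μ c₁ c₂) x ^ (n + 1)) = evalEP L / evalEP (LQ α β μ c₁ c₂) ^ (n + 1) from rfl, h3.deriv]
      rw [evalEP_append, evalEP_mulL, evalEP_smulL, evalEP_mulL]
      simp only [Pi.pow_apply, Nat.add_sub_cancel, Nat.cast_add, Nat.cast_one]
      have hQx := hQne x
      field_simp
      ring

end GardnerEP

theorem gardner_breather_schwartz
    (α β μ c₁ c₂ : ℝ) (hα : α ≠ 0) (hβ : β ≠ 0) (hμ : 0 < μ)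
    (hΔ : 0 < α ^ 2 + β ^ 2 - 4 * μ ^ 2) :
    ∃ f : SchwartzMap ℝ ℝ, ∀ x : ℝ, f x = gardnerB α β μ c₁ c₂ x := by
  have hβa : 0 < |β| := abs_pos.2 hβ
  obtain ⟨q, hq, hqlow⟩ := gardner_Qlow α β μ c₁ c₂ hα hβ hμ hΔ
  have hQne : ∀ x : ℝ, evalEP (GardnerEP.LQ α β μ c₁ c₂) x ≠ 0 := by
    intro x
    rw [← GardnerEP.hQeval]
    exact (gardner_Qpos α β μ c₁ c₂ hα hβ hμ hΔ x).ne'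
  have hQlow' : ∀ x : ℝ, q * Real.exp (2 * |β| * |x|) ≤ evalEP (GardnerEP.LQ α β μ c₁ c₂) x := by
    intro x
    rw [← GardnerEP.hQeval]
    exact hqlow x
  have hsmooth : ContDiff ℝ (⊤ : ℕ∞) (gardnerB α β μ c₁ c₂) := by
    rw [GardnerEP.gardnerB_eq α β μ c₁ c₂]
    exact ((contDiff_evalEP _).of_le (by simp)).div
      (((contDiff_evalEP _).of_le (by simp)).pow _) (fun x => pow_ne_zero _ (hQne x))
  refine ⟨⟨gardnerB α β μ c₁ c₂, hsmooth, ?_⟩, fun x => rfl⟩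
  intro k n
  obtain ⟨L, hLb, hLr⟩ := GardnerEP.iter_rep α β μ c₁ c₂ hα hβ hμ hΔ n
  refine ⟨(absSum L / q ^ (n+1)) * ((k.factorial : ℝ) / |β| ^ k), ?_⟩
  intro x
  rw [norm_iteratedFDeriv_eq_norm_iteratedDeriv, hLr, Real.norm_eq_abs, Real.norm_eq_abs]
  set u : ℝ := Real.exp (|β| * |x|) with hu
  have hu1 : 1 ≤ u := Real.one_le_exp (by positivity)
  have hu0 : 0 < u := lt_of_lt_of_le one_pos hu1
  -- numerator bound
  have hnum : |evalEP L x| ≤ absSum L * u ^ (2*n+1) := by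
    have h := evalEP_bound L ((2*(n:ℝ)+1) * |β|) hLb x
    have he : Real.exp ((2*(n:ℝ)+1) * |β| * |x|) = u ^ (2*n+1) := by
      rw [hu, ← Real.exp_nat_mul]
      congr 1
      push_cast
      ring
    rwa [he] at h
  -- denominator bound
  have hden : q ^ (n+1) * u ^ (2*n+2) ≤ evalEP (GardnerEP.LQ α β μ c₁ c₂) x ^ (n+1) := by
    have h1 : (q * Real.exp (2 * |β| * |x|)) ^ (n+1)
        ≤ evalEP (GardnerEP.LQ α β μ c₁ c₂) x ^ (n+1) := by
      apply pow_le_pow_left₀ (by positivity) (hQlow' x)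
    have he : Real.exp (2 * |β| * |x|) = u ^ 2 := by
      rw [hu, ← Real.exp_nat_mul]
      congr 1
      push_cast
      ring
    calc q ^ (n+1) * u ^ (2*n+2) = (q * Real.exp (2 * |β| * |x|)) ^ (n+1) := by
          rw [mul_pow, he, ← pow_mul]
          congr 2
          try ring
      _ ≤ _ := h1
  have hdenpos : 0 < evalEP (GardnerEP.LQ α β μ c₁ c₂) x ^ (n+1) := by
    have := lt_of_lt_of_le (by positivity : (0:ℝ) < q ^ (n+1) * u ^ (2*n+2)) hden
    exact this
  -- |x|^k bound
  have hxk : |x| ^ k * |β| ^ k ≤ (k.factorial : ℝ) * u := by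
    have h1 : (|β| * |x|) ^ k / (k.factorial : ℝ) ≤ u := by
      calc (|β| * |x|) ^ k / (k.factorial : ℝ)
          ≤ ∑ i ∈ Finset.range (k+1), (|β| * |x|) ^ i / (i.factorial : ℝ) := by
            apply Finset.single_le_sum (f := fun i => (|β| * |x|) ^ i / (i.factorial : ℝ))
              (fun i _ => by positivity) (Finset.self_mem_range_succ k)
        _ ≤ Real.exp (|β| * |x|) := Real.sum_le_exp_of_nonneg (by positivity) (k+1)
    have h2 : 0 < (k.factorial : ℝ) := by positivity
    rw [div_le_iff₀ h2] at h1
    calc |x| ^ k * |β| ^ k = (|β| * |x|) ^ k := by rw [mul_pow]; ring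
      _ ≤ u * (k.factorial : ℝ) := h1
      _ = (k.factorial : ℝ) * u := mul_comm _ _
  -- put together
  rw [abs_div, abs_of_pos hdenpos]
  have step1 : |evalEP L x| / evalEP (GardnerEP.LQ α β μ c₁ c₂) x ^ (n+1)
      ≤ (absSum L * u ^ (2*n+1)) / (q ^ (n+1) * u ^ (2*n+2)) := by
    apply div_le_div₀ (mul_nonneg (absSum_nonneg L) (by positivity)) hnum (by positivity) hden
  have step2 : (absSum L * u ^ (2*n+1)) / (q ^ (n+1) * u ^ (2*n+2))
      = (absSum L / q ^ (n+1)) / u := by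
    rw [show 2*n+2 = (2*n+1)+1 by ring, pow_succ]
    field_simp
    ring
  have hxnn : 0 ≤ |x| ^ k := by positivity
  calc |x| ^ k * (|evalEP L x| / evalEP (GardnerEP.LQ α β μ c₁ c₂) x ^ (n+1))
      ≤ |x| ^ k * ((absSum L / q ^ (n+1)) / u) := by
        rw [← step2]
        exact mul_le_mul_of_nonneg_left step1 hxnn
    _ ≤ (absSum L / q ^ (n+1)) * ((k.factorial : ℝ) / |β| ^ k) := by
        have hC : (0:ℝ) ≤ absSum L / q ^ (n+1) := div_nonneg (absSum_nonneg L) (by positivity)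
        have hrew : |x| ^ k * ((absSum L / q ^ (n+1)) / u)
            = (absSum L / q ^ (n+1)) * (|x| ^ k / u) := by ring
        rw [hrew]
        apply mul_le_mul_of_nonneg_left _ hC
        rw [div_le_div_iff₀ hu0 (by positivity : (0:ℝ) < |β| ^ k)]
        exact hxk
end
end
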